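/- Let P be a crisp extended LP. Then ζ₂(lfp(A_P^st)) = lfp(WF_P); that is, the well-founded fixpoint of the approximator A_P (the ≤p-least fixpoint of the stable approximator A_P^st) corresponds under ζ₂ to the Sakama well-founded model of P (the least fixpoint of WF_P with respect to componentwise inclusion). -/
import Mathlib


open Classical

/-- Literals over a type `A` of atoms: atoms `p` and strongly negated atoms `¬p`. -/
inductive Lit (A : Type*) where
  | pos : A → Lit A
  | neg : A → Lit A

/-- Crisp paraconsistent interpretations: each atom gets a pair of Boolean truth values
(truth, falsity); `true` plays the role of 1 and `false` of 0.  The order is the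
pointwise truth order `≤t`. -/
abbrev CInterp (A : Type*) := A → Bool × Bool

/-- Evaluation of a literal under a crisp paraconsistent interpretation. -/
def clit {A : Type*} (I : CInterp A) : Lit A → Bool
  | .pos p => (I p).1
  | .neg p => (I p).2

/-- A crisp rule body: a finite set of positive body literals and a finite
set of weakly negated body literals. -/
structure CBody (A : Type*) where
  pos : Finset (Lit A)
  wneg : Finset (Lit A)

/-- A crisp extended logic program: a set of rules `ℓ ← B`. -/
abbrev CProg (A : Type*) := Set (Lit A × CBody A)

/-- Pair evaluation of a crisp body: `1` iff all positive body literals are true in `I`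
and all weakly negated body literals are false in `J`. -/
noncomputable def cbody {A : Type*} (I J : CInterp A) (B : CBody A) : Bool :=
  if (∀ ℓ ∈ B.pos, clit I ℓ = true) ∧ (∀ ℓ ∈ B.wneg, clit J ℓ = false) then true else false

/-- The (lower half of the) crisp approximator `A_P(·,·)₁`: the head of an atom `p`
gets the max (over rules) of the pair-evaluations of the corresponding bodies
(max over the empty set being 0, i.e. `false`). -/
noncomputable def cA1 {A : Type*} (P : CProg A) (L U : CInterp A) : CInterp A :=
  fun p => (if ∃ B, (Lit.pos p, B) ∈ P ∧ cbody L U B = true then true else false,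
            if ∃ B, (Lit.neg p, B) ∈ P ∧ cbody L U B = true then true else false)

/-- The crisp approximator `A_P` on pairs. -/
noncomputable def cA {A : Type*} (P : CProg A) (LU : CInterp A × CInterp A) :
    CInterp A × CInterp A :=
  (cA1 P LU.1 LU.2, cA1 P LU.2 LU.1)

/-- The order isomorphism `ζ` from crisp paraconsistent interpretations to sets of literals. -/
def zeta {A : Type*} (I : CInterp A) : Set (Lit A) :=
  (Lit.pos '' {p | (I p).1 = true}) ∪ (Lit.neg '' {p | (I p).2 = true})

/-- Least pre-fixpoint (Knaster–Tarski least fixpoint for monotone maps). -/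
def lfpOf {α : Type*} [CompleteLattice α] (f : α → α) : α := sInf {x | f x ≤ x}

/-- Greatest post-fixpoint (Knaster–Tarski greatest fixpoint for monotone maps). -/
def gfpOf {α : Type*} [CompleteLattice α] (f : α → α) : α := sSup {x | x ≤ f x}

/-- The stable approximator `A_P^st`. -/
noncomputable def cAst {A : Type*} (P : CProg A) (LU : CInterp A × CInterp A) :
    CInterp A × CInterp A :=
  (lfpOf (fun X => cA1 P X LU.2), lfpOf (fun X => cA1 P X LU.1))

/-- The stable-approximator iteration `(L^i, U^i)` starting from `(⊥,⊤)`. -/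
noncomputable def iterLU {A : Type*} (P : CProg A) : ℕ → CInterp A × CInterp A
  | 0 => (⊥, ⊤)
  | i + 1 => cAst P (iterLU P i)

/-- Sakama's proven-facts operator `PF^{σ,δ}`. -/
def PF {A : Type*} (P : CProg A) (σ δ : Set (Lit A)) (α : Set (Lit A)) : Set (Lit A) :=
  {ℓ | ∃ B, (ℓ, B) ∈ P ∧ ↑B.pos ⊆ σ ∪ α ∧ ↑B.wneg ⊆ δ}

/-- Sakama's default-facts operator `DF^{σ,δ}`. -/
def DF {A : Type*} (P : CProg A) (σ δ : Set (Lit A)) (β : Set (Lit A)) : Set (Lit A) :=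
  {ℓ | ∀ B, (ℓ, B) ∈ P → (↑B.pos ∩ (β ∪ δ)).Nonempty ∨ (↑B.wneg ∩ σ).Nonempty}


/-- `ζ₂(L,U) := (ζ(L), Lit(Π) ∖ ζ(U))`. -/
def zeta2 {A : Type*} (LU : CInterp A × CInterp A) : Set (Lit A) × Set (Lit A) :=
  (zeta LU.1, Set.univ \ zeta LU.2)

/-- Sakama's well-founded operator `WF_P(σ,δ) := (σ ∪ lfp(PF^{σ,δ}), δ ∪ gfp(DF^{σ,δ}))`. -/
def WFP {A : Type*} (P : CProg A) (sd : Set (Lit A) × Set (Lit A)) :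
    Set (Lit A) × Set (Lit A) :=
  (sd.1 ∪ lfpOf (fun α => PF P sd.1 sd.2 α), sd.2 ∪ gfpOf (fun α => DF P sd.1 sd.2 α))

/-- The `≤p`-least fixpoint of the stable approximator `A_P^st`, computed in the lattice
`𝕀 × 𝕀ᵒᵈ`, whose order is exactly the precision order
`(L,U) ≤p (M,T) ↔ L ≤t M ∧ T ≤t U`. -/
noncomputable def wfFixpoint {A : Type*} (P : CProg A) : CInterp A × CInterp A :=
  let g : CInterp A × (CInterp A)ᵒᵈ → CInterp A × (CInterp A)ᵒᵈ := fun x =>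
    let r := cAst P (x.1, OrderDual.ofDual x.2)
    (r.1, OrderDual.toDual r.2)
  let y := lfpOf g
  (y.1, OrderDual.ofDual y.2)

section Aux

variable {A : Type*}

lemma iteb {c : Prop} [Decidable c] : (if c then true else false) = true ↔ c := by
  by_cases h : c <;> simp [h]

lemma mem_zeta {I : CInterp A} {ℓ : Lit A} : ℓ ∈ zeta I ↔ clit I ℓ = true := by
  cases ℓ <;> simp [zeta, clit]

/-- `ζ` as an order isomorphism. -/
noncomputable def zetaIso : CInterp A ≃o Set (Lit A) where
  toFun := zeta
  invFun S := fun p =>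
    ((if Lit.pos p ∈ S then true else false), (if Lit.neg p ∈ S then true else false))
  left_inv I := by
    funext p
    have h1 : (Lit.pos p ∈ zeta I) ↔ (I p).1 = true := by rw [mem_zeta]; rfl
    have h2 : (Lit.neg p ∈ zeta I) ↔ (I p).2 = true := by rw [mem_zeta]; rfl
    by_cases hc1 : (Lit.pos p ∈ zeta I) <;> by_cases hc2 : (Lit.neg p ∈ zeta I) <;>
      simp_all [Prod.ext_iff] <;> simp [Bool.eq_false_iff, Ne, h1, h2] <;> tauto
  right_inv S := by
    ext ℓ
    rw [mem_zeta]
    cases ℓ <;> simp [clit, iteb]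
  map_rel_iff' := by
    intro I J
    show zeta I ⊆ zeta J ↔ I ≤ J
    constructor
    · intro h p
      constructor
      · rw [Bool.le_iff_imp]
        intro hb
        have := h (mem_zeta.mpr (show clit I (Lit.pos p) = true from hb))
        exact mem_zeta.mp this
      · rw [Bool.le_iff_imp]
        intro hb
        have := h (mem_zeta.mpr (show clit I (Lit.neg p) = true from hb))
        exact mem_zeta.mp this
    · intro h ℓ hℓ
      rw [mem_zeta] at hℓ ⊢
      cases ℓ with
      | pos p => exact Bool.le_iff_imp.mp (h p).1 hℓ
      | neg p => exact Bool.le_iff_imp.mp (h p).2 hℓ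

@[simp] lemma zetaIso_apply (I : CInterp A) : (zetaIso : CInterp A ≃o Set (Lit A)) I = zeta I := rfl

@[simp] lemma zeta_symm_apply (S : Set (Lit A)) :
    zeta ((zetaIso : CInterp A ≃o Set (Lit A)).symm S) = S :=
  (zetaIso : CInterp A ≃o Set (Lit A)).apply_symm_apply S

/-- Transport of `lfpOf` through an order isomorphism. -/
lemma lfp_conj {α β : Type*} [CompleteLattice α] [CompleteLattice β]
    (e : α ≃o β) (f : α → α) :
    e (lfpOf f) = lfpOf (fun y => e (f (e.symm y))) := by
  unfold lfpOf
  rw [OrderIso.map_sInf, ← sInf_image]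
  congr 1
  ext y
  simp only [Set.mem_image, Set.mem_setOf_eq]
  constructor
  · rintro ⟨x, hx, rfl⟩
    rw [e.symm_apply_apply, e.le_iff_le]
    exact hx
  · intro h
    refine ⟨e.symm y, ?_, e.apply_symm_apply y⟩
    rw [← e.le_iff_le, e.apply_symm_apply]
    exact h

lemma cbody_iff {X U : CInterp A} {B : CBody A} :
    cbody X U B = true ↔ (↑B.pos ⊆ zeta X ∧ ↑B.wneg ⊆ (zeta U)ᶜ) := by
  rw [cbody, iteb]
  constructor
  · rintro ⟨h1, h2⟩
    refine ⟨fun ℓ hℓ => mem_zeta.mpr (h1 ℓ hℓ), fun ℓ hℓ => ?_⟩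
    simp only [Set.mem_compl_iff, mem_zeta]
    simp [h2 ℓ hℓ]
  · rintro ⟨h1, h2⟩
    refine ⟨fun ℓ hℓ => mem_zeta.mp (h1 hℓ), fun ℓ hℓ => ?_⟩
    have := h2 hℓ
    simp only [Set.mem_compl_iff, mem_zeta] at this
    simpa using this

lemma zeta_cA1 (P : CProg A) (X U : CInterp A) :
    zeta (cA1 P X U) = PF P ∅ (zeta U)ᶜ (zeta X) := by
  ext ℓ
  rw [mem_zeta]
  cases ℓ with
  | pos p =>
      show (cA1 P X U p).1 = true ↔ _
      rw [cA1, iteb]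
      simp [PF, cbody_iff]
  | neg p =>
      show (cA1 P X U p).2 = true ↔ _
      rw [cA1, iteb]
      simp [PF, cbody_iff]

lemma compl_PF (P : CProg A) (σ β : Set (Lit A)) :
    (PF P ∅ σᶜ βᶜ)ᶜ = DF P σ ∅ β := by
  ext ℓ
  simp only [PF, DF, Set.mem_compl_iff, Set.mem_setOf_eq, not_exists, Set.empty_union,
    Set.union_empty]
  constructor
  · intro h B hB
    by_cases hp : ↑B.pos ⊆ βᶜ
    · have hw : ¬ (↑B.wneg ⊆ σᶜ) := fun hw => h B ⟨hB, hp, hw⟩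
      right
      rcases Set.not_subset.mp hw with ⟨x, hx1, hx2⟩
      exact ⟨x, hx1, by simpa using hx2⟩
    · left
      rcases Set.not_subset.mp hp with ⟨x, hx1, hx2⟩
      exact ⟨x, hx1, by simpa using hx2⟩
  · rintro h B ⟨hB, hp, hw⟩
    rcases h B hB with ⟨x, hx1, hx2⟩ | ⟨x, hx1, hx2⟩
    · exact absurd hx2 (by simpa using hp hx1)
    · exact absurd hx2 (by simpa using hw hx1)

lemma compl_lfpOf {X : Type*} (h : Set X → Set X) :
    (lfpOf h)ᶜ = gfpOf (fun β => (h βᶜ)ᶜ) := by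
  unfold lfpOf gfpOf
  rw [compl_sInf, ← sSup_image]
  congr 1
  ext β
  simp only [Set.mem_image, Set.mem_setOf_eq]
  constructor
  · rintro ⟨α, hα, rfl⟩
    rw [compl_compl]
    exact compl_le_compl hα
  · intro hβ
    refine ⟨βᶜ, ?_, compl_compl β⟩
    rw [← compl_compl (h βᶜ)]
    exact compl_le_compl (by simpa using hβ)

lemma PF_mono (P : CProg A) (σ δ : Set (Lit A)) : Monotone (PF P σ δ) := by
  intro a b hab ℓ ⟨B, h1, h2, h3⟩
  exact ⟨B, h1, h2.trans (Set.union_subset_union_right _ hab), h3⟩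

lemma PF_mono_params (P : CProg A) {σ σ' δ δ' : Set (Lit A)} (hσ : σ ⊆ σ') (hδ : δ ⊆ δ')
    (α : Set (Lit A)) : PF P σ δ α ⊆ PF P σ' δ' α := by
  rintro ℓ ⟨B, h1, h2, h3⟩
  exact ⟨B, h1, h2.trans (Set.union_subset_union_left _ hσ), h3.trans hδ⟩

lemma DF_mono (P : CProg A) (σ δ : Set (Lit A)) : Monotone (DF P σ δ) := by
  intro a b hab ℓ hℓ B hB
  rcases hℓ B hB with ⟨x, hx1, hx2⟩ | hx
  · exact Or.inl ⟨x, hx1, Set.union_subset_union_left _ hab hx2⟩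
  · exact Or.inr hx

lemma DF_mono_params (P : CProg A) {σ σ' δ δ' : Set (Lit A)} (hσ : σ ⊆ σ') (hδ : δ ⊆ δ')
    (β : Set (Lit A)) : DF P σ δ β ⊆ DF P σ' δ' β := by
  intro ℓ hℓ B hB
  rcases hℓ B hB with ⟨x, hx1, hx2⟩ | ⟨x, hx1, hx2⟩
  · exact Or.inl ⟨x, hx1, Set.union_subset_union_right _ hδ hx2⟩
  · exact Or.inr ⟨x, hx1, hσ hx2⟩

lemma PF_shift (P : CProg A) (σ δ α : Set (Lit A)) :
    PF P σ δ α = PF P ∅ δ (σ ∪ α) := by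
  ext ℓ; simp [PF]

lemma DF_shift (P : CProg A) (σ δ β : Set (Lit A)) :
    DF P σ δ β = DF P σ ∅ (β ∪ δ) := by
  ext ℓ; simp [DF]

lemma lfpOf_le {α : Type*} [CompleteLattice α] {f : α → α} {a : α} (h : f a ≤ a) :
    lfpOf f ≤ a := sInf_le h

lemma le_gfpOf {α : Type*} [CompleteLattice α] {f : α → α} {a : α} (h : a ≤ f a) :
    a ≤ gfpOf f := le_sSup h

lemma lfpOf_map {α : Type*} [CompleteLattice α] {f : α → α} (hf : Monotone f) :
    f (lfpOf f) = lfpOf f :=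
  OrderHom.map_lfp (⟨f, hf⟩ : α →o α)

lemma gfpOf_map {α : Type*} [CompleteLattice α] {f : α → α} (hf : Monotone f) :
    f (gfpOf f) = gfpOf f :=
  OrderHom.map_gfp (⟨f, hf⟩ : α →o α)

lemma lfpOf_mono_fun {α : Type*} [CompleteLattice α] {f g : α → α} (h : ∀ x, f x ≤ g x) :
    lfpOf f ≤ lfpOf g := by
  apply sInf_le_sInf
  intro x hx
  exact le_trans (h x) hx

lemma gfpOf_mono_fun {α : Type*} [CompleteLattice α] {f g : α → α} (h : ∀ x, f x ≤ g x) :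
    gfpOf f ≤ gfpOf g := by
  apply sSup_le_sSup
  intro x hx
  exact le_trans hx (h x)

end Aux

section Iso2

variable {A : Type*}

/-- The combined order isomorphism `ζ₂` from `𝕀 × 𝕀ᵒᵈ` to pairs of sets of literals. -/
noncomputable def E2 : (CInterp A × (CInterp A)ᵒᵈ) ≃o (Set (Lit A) × Set (Lit A)) where
  toFun x := (zeta x.1, (zeta (OrderDual.ofDual x.2))ᶜ)
  invFun s := ((zetaIso : CInterp A ≃o Set (Lit A)).symm s.1,
    OrderDual.toDual ((zetaIso : CInterp A ≃o Set (Lit A)).symm s.2ᶜ))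
  left_inv x := by
    refine Prod.ext ?_ ?_
    · exact (zetaIso : CInterp A ≃o Set (Lit A)).symm_apply_apply x.1
    · show OrderDual.toDual ((zetaIso : CInterp A ≃o Set (Lit A)).symm
        ((zeta (OrderDual.ofDual x.2))ᶜᶜ)) = x.2
      rw [compl_compl]
      exact congrArg OrderDual.toDual
        ((zetaIso : CInterp A ≃o Set (Lit A)).symm_apply_apply (OrderDual.ofDual x.2))
  right_inv s := by
    refine Prod.ext ?_ ?_
    · exact zeta_symm_apply s.1
    · show (zeta ((zetaIso : CInterp A ≃o Set (Lit A)).symm s.2ᶜ))ᶜ = s.2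
      rw [zeta_symm_apply, compl_compl]
  map_rel_iff' := by
    intro x y
    show (_, _) ≤ (_, _) ↔ x ≤ y
    rw [Prod.le_def, Prod.le_def]
    constructor
    · rintro ⟨h1, h2⟩
      refine ⟨(zetaIso : CInterp A ≃o Set (Lit A)).le_iff_le.mp h1, ?_⟩
      show OrderDual.ofDual y.2 ≤ OrderDual.ofDual x.2
      exact (zetaIso : CInterp A ≃o Set (Lit A)).le_iff_le.mp (compl_le_compl_iff_le.mp h2)
    · rintro ⟨h1, h2⟩
      refine ⟨(zetaIso : CInterp A ≃o Set (Lit A)).le_iff_le.mpr h1, ?_⟩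
      exact compl_le_compl ((zetaIso : CInterp A ≃o Set (Lit A)).le_iff_le.mpr h2)

@[simp] lemma E2_apply (x : CInterp A × (CInterp A)ᵒᵈ) :
    (E2 : (CInterp A × (CInterp A)ᵒᵈ) ≃o (Set (Lit A) × Set (Lit A))) x
      = (zeta x.1, (zeta (OrderDual.ofDual x.2))ᶜ) := rfl

@[simp] lemma E2_symm_apply (s : Set (Lit A) × Set (Lit A)) :
    (E2 : (CInterp A × (CInterp A)ᵒᵈ) ≃o (Set (Lit A) × Set (Lit A))).symm s
      = ((zetaIso : CInterp A ≃o Set (Lit A)).symm s.1,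
         OrderDual.toDual ((zetaIso : CInterp A ≃o Set (Lit A)).symm s.2ᶜ)) := rfl

end Iso2

/-- The well-founded fixpoint of the approximator `A_P` (the `≤p`-least
fixpoint of the stable approximator `A_P^st`) corresponds under `ζ₂` to the Sakama
well-founded model of `P` (the least fixpoint of `WF_P` w.r.t. componentwise inclusion). -/
theorem zeta2_wfFixpoint_eq_lfp_WFP {A : Type*}
    (P : CProg A) (hfin : P.Finite) :
    zeta2 (wfFixpoint P) = lfpOf (WFP P) := by
  classical
  -- the operator of which `wfFixpoint` takes the least fixpoint
  set G : CInterp A × (CInterp A)ᵒᵈ → CInterp A × (CInterp A)ᵒᵈ := fun x =>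
    ((cAst P (x.1, OrderDual.ofDual x.2)).1,
      OrderDual.toDual ((cAst P (x.1, OrderDual.ofDual x.2)).2)) with hG
  -- the conjugated operator on pairs of sets of literals
  set Wp : Set (Lit A) × Set (Lit A) → Set (Lit A) × Set (Lit A) := fun s =>
    (lfpOf (fun α => PF P ∅ s.2 α), gfpOf (fun β => DF P s.1 ∅ β)) with hWp
  -- Step 1: `ζ₂(wfFixpoint P) = E2 (lfp G)`
  have h0 : zeta2 (wfFixpoint P) =
      (E2 : (CInterp A × (CInterp A)ᵒᵈ) ≃o (Set (Lit A) × Set (Lit A))) (lfpOf G) := by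
    show zeta2 ((lfpOf G).1, OrderDual.ofDual (lfpOf G).2) = _
    rw [E2_apply]
    unfold zeta2
    rw [Set.compl_eq_univ_diff]
  -- Step 2: transport the lfp through the iso and identify the conjugate with `Wp`
  have h1 : (E2 : (CInterp A × (CInterp A)ᵒᵈ) ≃o (Set (Lit A) × Set (Lit A))) (lfpOf G)
      = lfpOf Wp := by
    rw [lfp_conj (E2 : (CInterp A × (CInterp A)ᵒᵈ) ≃o (Set (Lit A) × Set (Lit A))) G]
    congr 1
    funext s
    rw [E2_symm_apply]
    set L : CInterp A := (zetaIso : CInterp A ≃o Set (Lit A)).symm s.1 with hL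
    set U : CInterp A := (zetaIso : CInterp A ≃o Set (Lit A)).symm s.2ᶜ with hU
    have hGv : G (L, OrderDual.toDual U)
        = ((cAst P (L, U)).1, OrderDual.toDual ((cAst P (L, U)).2)) := rfl
    rw [hGv, E2_apply]
    refine Prod.ext ?_ ?_
    · show zeta (lfpOf (fun X => cA1 P X U)) = lfpOf (fun α => PF P ∅ s.2 α)
      rw [show zeta (lfpOf (fun X => cA1 P X U))
          = (zetaIso : CInterp A ≃o Set (Lit A)) (lfpOf (fun X => cA1 P X U)) from rfl]
      rw [lfp_conj (zetaIso : CInterp A ≃o Set (Lit A)) (fun X => cA1 P X U)]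
      congr 1
      funext α
      show zeta (cA1 P ((zetaIso : CInterp A ≃o Set (Lit A)).symm α) U) = PF P ∅ s.2 α
      rw [zeta_cA1, hU]
      simp only [zeta_symm_apply, compl_compl]
    · show (zeta (lfpOf (fun X => cA1 P X L)))ᶜ = gfpOf (fun β => DF P s.1 ∅ β)
      have hz : zeta (lfpOf (fun X => cA1 P X L)) = lfpOf (fun α => PF P ∅ s.1ᶜ α) := by
        rw [show zeta (lfpOf (fun X => cA1 P X L))
            = (zetaIso : CInterp A ≃o Set (Lit A)) (lfpOf (fun X => cA1 P X L)) from rfl]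
        rw [lfp_conj (zetaIso : CInterp A ≃o Set (Lit A)) (fun X => cA1 P X L)]
        congr 1
        funext α
        show zeta (cA1 P ((zetaIso : CInterp A ≃o Set (Lit A)).symm α) L) = PF P ∅ s.1ᶜ α
        rw [zeta_cA1, hL]
        simp only [zeta_symm_apply]
      rw [hz, compl_lfpOf]
      congr 1
      funext β
      exact compl_PF P s.1 β
  -- Step 3: `lfp Wp = lfp (WFP P)`
  have hWpMono : Monotone Wp := by
    intro s t hst
    rw [Prod.le_def]
    constructor
    · exact lfpOf_mono_fun (fun α => PF_mono_params P (subset_refl ∅) hst.2 α)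
    · exact gfpOf_mono_fun (fun β => DF_mono_params P hst.1 (subset_refl ∅) β)
  have hWMono : Monotone (WFP P) := by
    intro s t hst
    rw [Prod.le_def]
    constructor
    · exact Set.union_subset_union hst.1
        (lfpOf_mono_fun (fun α => PF_mono_params P hst.1 hst.2 α))
    · exact Set.union_subset_union hst.2
        (gfpOf_mono_fun (fun β => DF_mono_params P hst.1 hst.2 β))
  have h2 : lfpOf Wp = lfpOf (WFP P) := by
    set w : Set (Lit A) × Set (Lit A) := lfpOf (WFP P) with hw
    set v : Set (Lit A) × Set (Lit A) := lfpOf Wp with hv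
    have hwfix : WFP P w = w := by rw [hw]; exact lfpOf_map hWMono
    have hvfix : Wp v = v := by rw [hv]; exact lfpOf_map hWpMono
    have hwfix1 : w.1 ∪ lfpOf (fun α => PF P w.1 w.2 α) = w.1 := congrArg Prod.fst hwfix
    have hwfix2 : w.2 ∪ gfpOf (fun β => DF P w.1 w.2 β) = w.2 := congrArg Prod.snd hwfix
    have hA : lfpOf (fun α => PF P w.1 w.2 α) ⊆ w.1 := Set.union_eq_left.mp hwfix1
    have hB : gfpOf (fun β => DF P w.1 w.2 β) ⊆ w.2 := Set.union_eq_left.mp hwfix2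
    have hv1 : v.1 = lfpOf (fun α => PF P ∅ v.2 α) := (congrArg Prod.fst hvfix).symm
    have hv2 : v.2 = gfpOf (fun β => DF P v.1 ∅ β) := (congrArg Prod.snd hvfix).symm
    apply le_antisymm
    · -- v ≤ w : show w is a pre-fixpoint of Wp
      apply lfpOf_le
      rw [Prod.le_def]
      constructor
      · show lfpOf (fun α => PF P ∅ w.2 α) ⊆ w.1
        apply lfpOf_le
        calc PF P ∅ w.2 w.1
            ⊆ PF P ∅ w.2 (w.1 ∪ lfpOf (fun α => PF P w.1 w.2 α)) :=
              PF_mono P ∅ w.2 Set.subset_union_left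
          _ = PF P w.1 w.2 (lfpOf (fun α => PF P w.1 w.2 α)) := (PF_shift P _ _ _).symm
          _ = lfpOf (fun α => PF P w.1 w.2 α) := lfpOf_map (PF_mono P w.1 w.2)
          _ ⊆ w.1 := hA
      · show gfpOf (fun β => DF P w.1 ∅ β) ⊆ w.2
        refine le_trans ?_ hB
        exact gfpOf_mono_fun (fun β => DF_mono_params P (subset_refl w.1) (Set.empty_subset w.2) β)
    · -- w ≤ v : show v is a pre-fixpoint of WFP P
      apply lfpOf_le
      rw [Prod.le_def]
      constructor
      · show v.1 ∪ lfpOf (fun α => PF P v.1 v.2 α) ⊆ v.1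
        apply Set.union_subset (subset_refl _)
        apply lfpOf_le
        have : PF P v.1 v.2 v.1 = v.1 := by
          rw [PF_shift, Set.union_self]
          conv_lhs => rw [hv1]
          rw [lfpOf_map (PF_mono P ∅ v.2), ← hv1]
        exact le_of_eq this
      · show v.2 ∪ gfpOf (fun β => DF P v.1 v.2 β) ⊆ v.2
        apply Set.union_subset (subset_refl _)
        set γ : Set (Lit A) := gfpOf (fun β => DF P v.1 v.2 β) with hγdef
        have hγ : DF P v.1 v.2 γ = γ := by rw [hγdef]; exact gfpOf_map (DF_mono P v.1 v.2)
        have hfix2 : DF P v.1 ∅ v.2 = v.2 := by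
          conv_lhs => rw [hv2]
          rw [gfpOf_map (DF_mono P v.1 ∅), ← hv2]
        have key : γ ∪ v.2 ⊆ DF P v.1 ∅ (γ ∪ v.2) := by
          apply Set.union_subset
          · rw [← DF_shift, hγ]
          · calc v.2 = DF P v.1 ∅ v.2 := hfix2.symm
              _ ⊆ DF P v.1 ∅ (γ ∪ v.2) := DF_mono P v.1 ∅ Set.subset_union_right
        have hle : γ ∪ v.2 ⊆ gfpOf (fun β => DF P v.1 ∅ β) := le_gfpOf key
        rw [← hv2] at hle
        exact Set.subset_union_left.trans hle
  rw [h0, h1, h2]
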